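/- arXiv:2402.14668 — 2 statements merged into one kernel-verified Lean document; each statement's English description precedes it below -/
import Mathlib

section
/- For every partitions π, μ and ν such that π ⊢ n with n ≥ |μ| and n ≥ |ν|, one has ∑_{i=0}^{m_1(π)} C(m_1(π), i) · g^{π̃∪1^i}_{μ,ν}(α) = C(m_1(μ)+n−|μ|, m_1(μ)) · C(m_1(ν)+n−|ν|, m_1(ν)) · c^π_{μ∪1^{n−|μ|}, ν∪1^{n−|ν|}}(α), where π̃ := π \ 1^{m_1(π)} is the partition obtained from π by deleting all parts equal to 1, and λ∪1^k denotes the partition obtained by adjoining k parts equal to 1. -/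
/-!
Multiplying `c^π_{μ∪1^{n-|μ|}, ν∪1^{n-|ν|}}` by the two binomials turns the coefficients
`[p_{μ∪1^{n-|μ|}}] J_θ` and `[p_{ν∪1^{n-|ν|}}] J_θ` into `θ_μ(θ)` and `θ_ν(θ)` for `θ ⊢ n`.
Expanding `θ_μ θ_ν = ∑ g^{π'}_{μ,ν} θ_{π'}`, the right-hand side becomes
`∑_{π'} g^{π'}_{μ,ν} ∑_{θ ⊢ n} z_π α^{ℓ(π)} j_θ⁻¹ [p_π] J_θ · θ_{π'}(θ)`. By the dual orthogonality
relation `∑_{θ ⊢ n} j_θ⁻¹ [p_π] J_θ [p_ρ] J_θ = δ_{πρ} / (z_π α^{ℓ(π)})`, obtained by inverting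
the matrix form of the orthogonality of the `J_θ`, the inner sum is nonzero only when
`π' ∪ 1^k = π` for some `k`, i.e. `π' = π̃ ∪ 1^i` with `i ≤ m₁(π)`, and then it equals
`C(m₁(π), i)`.

The inversion needs the `J_θ` to be homogeneous, which follows from triangularity, and
`j_θ ≠ 0`, which follows from positivity once `α` is specialized to a positive transcendental real.
-/

open scoped Classical

noncomputable section

/-- The base field `ℚ(α)` of rational functions in the Jack parameter `α`. -/
abbrev F : Type := RatFunc ℚ

/-- The Jack deformation parameter `α`. -/
def alpha : F := RatFunc.X

/-- An integer partition, encoded as a multiset of positive integers (its parts). -/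
abbrev JPartition : Type := Multiset ℕ+

/-- The size `|λ|` of a partition. -/
def psize (l : JPartition) : ℕ := (l.map fun i => (i : ℕ)).sum

/-- The length `ℓ(λ)` of a partition. -/
def plen (l : JPartition) : ℕ := Multiset.card l

/-- `m_i(λ)`, the number of parts of `λ` equal to `i`. -/
def pmult (l : JPartition) (i : ℕ+) : ℕ := Multiset.count i l

/-- `λ ∪ 1^k`, adjoining `k` parts equal to `1`. -/
def addOnes (l : JPartition) (k : ℕ) : JPartition := l + Multiset.replicate k 1

/-- `λ̃`, the partition obtained by deleting all parts equal to `1`. -/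
def removeOnes (l : JPartition) : JPartition := Multiset.filter (fun i => i ≠ 1) l

/-- Exponent vectors of monomials in the power-sum generators `p₁, p₂, …`. -/
abbrev Exp : Type := ℕ+ →₀ ℕ

/-- The exponent vector of the monomial `p_λ`. -/
def toExp (l : JPartition) : Exp := l.toFinset.sum fun i => Finsupp.single i (Multiset.count i l)

/-- The partition corresponding to an exponent vector. -/
def toPart (m : Exp) : JPartition := m.sum fun i k => Multiset.replicate k i

/-- The weighted degree (`deg p_i = i`) of an exponent vector; this is the size of the
corresponding partition. -/
def wt (m : Exp) : ℕ := m.sum fun i k => k * (i : ℕ)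

/-- The algebra `ℚ(α)[p₁, p₂, …]` of symmetric functions written in the power-sum basis. -/
abbrev SymA : Type := MvPolynomial ℕ+ F

/-- The power-sum monomial `p_λ`. -/
def pPow (l : JPartition) : SymA := (l.map fun i => MvPolynomial.X i).prod

/-- `z_λ α^{ℓ(λ)}`, attached to the exponent vector of `p_λ`. -/
def zalpha (m : Exp) : F :=
  algebraMap ℚ F (m.prod fun i k => (Nat.factorial k : ℚ) * ((i : ℕ) : ℚ) ^ k) *
    alpha ^ (m.sum fun _ k => k)

/-- The `α`-deformed Hall scalar product: `⟨p_λ, p_μ⟩ = δ_{λμ} z_λ α^{ℓ(λ)}`. -/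
def hall (f g : SymA) : F :=
  ∑ m ∈ f.support, MvPolynomial.coeff m f * MvPolynomial.coeff m g * zalpha m

/-- The parts of a partition, sorted in weakly decreasing order. -/
def sortedParts (l : JPartition) : List ℕ := ((l.map fun i => (i : ℕ)).sort (· ≤ ·)).reverse

/-- The sum of the `k` largest parts of a partition. -/
def topSum (l : JPartition) (k : ℕ) : ℕ := ((sortedParts l).take k).sum

/-- The dominance order on partitions: `μ ⊴ λ`. -/
def dominates (mu lam : JPartition) : Prop :=
  psize mu = psize lam ∧ ∀ k, topSum mu k ≤ topSum lam k

/-- Evaluation of a symmetric function (in power-sum coordinates) in `N` variables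
`x₁, …, x_N`: it sends `p_i ↦ x₁^i + ⋯ + x_N^i`. -/
def evalN (N : ℕ) : SymA →ₐ[F] MvPolynomial (Fin N) F :=
  MvPolynomial.aeval fun i : ℕ+ => ∑ j : Fin N, MvPolynomial.X j ^ (i : ℕ)

/-- The exponent of the monomial `x₁^{μ₁} ⋯ x_s^{μ_s}` in `N` variables, for `μ` a
partition; its coefficient in a symmetric polynomial is the coefficient of the monomial
symmetric function `m_μ` (provided `N ≥ ℓ(μ)`). -/
def xexp (mu : JPartition) (N : ℕ) : Fin N →₀ ℕ :=
  Finsupp.equivFunOnFinite.symm fun j => (sortedParts mu).getD (j : ℕ) 0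

/-- The defining properties of the family of Jack polynomials `J_λ^{(α)}` (Macdonald's
characterization): orthogonality for the `α`-deformed Hall product, triangularity with
respect to monomial symmetric functions in dominance order, and normalization
`[p_{1^n}] J_λ^{(α)} = 1`. -/
structure IsJackFamily (J : JPartition → SymA) : Prop where
  orthogonal : ∀ l m : JPartition, l ≠ m → hall (J l) (J m) = 0
  triangular : ∀ l m : JPartition, ¬ dominates m l →
    MvPolynomial.coeff (xexp m (psize l + psize m + plen m))
      (evalN (psize l + psize m + plen m) (J l)) = 0
  normalized : ∀ l : JPartition, MvPolynomial.coeff (Finsupp.single 1 (psize l)) (J l) = 1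

/-- The Jack character `θ_μ^{(α)}(λ)`. -/
def theta (J : JPartition → SymA) (mu lam : JPartition) : F :=
  if psize lam < psize mu then 0
  else (Nat.choose (psize lam - psize mu + pmult mu 1) (pmult mu 1) : F) *
    MvPolynomial.coeff (toExp (addOnes mu (psize lam - psize mu))) (J lam)

/-- `g` is the family of structure coefficients of Jack characters:
`θ_μ^{(α)} θ_ν^{(α)} = ∑_π g^π_{μ,ν}(α) θ_π^{(α)}` (as functions on Young diagrams,
with finitely many nonzero terms). -/
def IsStructCoeffs (J : JPartition → SymA) (g : JPartition → JPartition → JPartition → F) :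
    Prop :=
  (∀ mu nu : JPartition, {pi : JPartition | g pi mu nu ≠ 0}.Finite) ∧
  ∀ mu nu lam : JPartition,
    theta J mu lam * theta J nu lam = ∑ᶠ pi : JPartition, g pi mu nu * theta J pi lam


/-- `c` is the family of connection coefficients `c^π_{μ,ν}(α)` of Goulden–Jackson,
defined (for three partitions of the same size `n`) by the expansion
`∑_{n≥0} t^n ∑_{θ⊢n} (1/j_θ^{(α)}) J_θ^{(α)}(p) J_θ^{(α)}(q) J_θ^{(α)}(r)
  = ∑_{n≥0} t^n ∑_{π,μ,ν⊢n} (c^π_{μ,ν}(α)/(z_π α^{ℓ(π)})) p_π q_μ r_ν`,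
i.e. by extracting the coefficient of `t^n p_π q_μ r_ν`. -/
def IsConnCoeffs (J : JPartition → SymA)
    (c : JPartition → JPartition → JPartition → F) : Prop :=
  ∀ pi mu nu : JPartition, psize pi = psize mu → psize pi = psize nu →
    c pi mu nu = zalpha (toExp pi) *
      ∑ᶠ th : JPartition, if psize th = psize pi then
        (hall (J th) (J th))⁻¹ * MvPolynomial.coeff (toExp pi) (J th) *
          MvPolynomial.coeff (toExp mu) (J th) * MvPolynomial.coeff (toExp nu) (J th)
      else 0

lemma toExp_apply (l : JPartition) (i : ℕ+) : toExp l i = Multiset.count i l := by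
  rw [toExp, Finset.sum_apply', Finset.sum_eq_single i]
  · simp
  · intro b _ hb
    simp [hb]
  · intro h
    simp [Multiset.count_eq_zero_of_notMem (by simpa using h)]

lemma count_toPart (m : Exp) (i : ℕ+) : Multiset.count i (toPart m) = m i := by
  rw [toPart, Finsupp.sum, Multiset.count_sum', Finset.sum_eq_single i]
  · simp
  · intro b _ hb
    simp [Multiset.count_replicate, hb]
  · intro h
    simp [Finsupp.notMem_support_iff.1 h]

lemma toExp_toPart (m : Exp) : toExp (toPart m) = m := by
  ext i
  rw [toExp_apply, count_toPart]

lemma toPart_toExp (l : JPartition) : toPart (toExp l) = l :=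
  Multiset.ext.2 fun i => by rw [count_toPart, toExp_apply]

lemma toExp_injective : Function.Injective toExp :=
  Function.LeftInverse.injective toPart_toExp

lemma toPart_add (m m' : Exp) : toPart (m + m') = toPart m + toPart m' :=
  Multiset.ext.2 fun i => by rw [Multiset.count_add, count_toPart, count_toPart, count_toPart,
    Finsupp.add_apply]

lemma toPart_single (i : ℕ+) (k : ℕ) : toPart (Finsupp.single i k) = Multiset.replicate k i :=
  Multiset.ext.2 fun j => by rw [count_toPart, Multiset.count_replicate, Finsupp.single_apply]

lemma psize_toPart (m : Exp) : psize (toPart m) = wt m := by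
  induction m using Finsupp.induction with
  | zero => simp [toPart, psize, wt]
  | single_add i k f hif hk ih =>
    rw [toPart_add, toPart_single, wt, Finsupp.sum_add_index' (by simp) fun _ _ _ => add_mul _ _ _,
      Finsupp.sum_single_index (zero_mul _), ← wt, ← ih]
    simp [psize]

lemma psize_addOnes (l : JPartition) (k : ℕ) : psize (addOnes l k) = psize l + k := by
  simp [psize, addOnes, Multiset.map_replicate]

lemma pmult_addOnes_one (l : JPartition) (k : ℕ) : pmult (addOnes l k) 1 = pmult l 1 + k := by
  simp [pmult, addOnes]

lemma addOnes_addOnes (l : JPartition) (a b : ℕ) :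
    addOnes (addOnes l a) b = addOnes l (a + b) := by
  rw [addOnes, addOnes, addOnes, add_assoc, Multiset.replicate_add]

lemma removeOnes_addOnes (l : JPartition) (k : ℕ) :
    removeOnes (addOnes l k) = removeOnes l := by
  simp only [removeOnes, addOnes, Multiset.filter_add, add_eq_left, Multiset.filter_eq_nil]
  exact fun a h => not_not.2 (Multiset.eq_of_mem_replicate h)

lemma addOnes_removeOnes (l : JPartition) : addOnes (removeOnes l) (pmult l 1) = l := by
  rw [addOnes, removeOnes, pmult, add_comm, ← Multiset.filter_eq', Multiset.filter_add_not]

lemma pmult_removeOnes (l : JPartition) : pmult (removeOnes l) 1 = 0 := by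
  simp [pmult, removeOnes]

/-- In `psize` and `sortedParts`, `l.map fun i => (i : ℕ)` elaborates as the identity mapped
over the monadic coercion of `l` to `Multiset ℕ`; this brings it back to `Multiset.map`. -/
lemma map_coe_eq_map_val (l : JPartition) : (l.map fun i => (i : ℕ)) = l.map PNat.val := by
  simp

lemma psize_eq_sum_map_val (l : JPartition) : psize l = (l.map PNat.val).sum := by
  rw [psize, map_coe_eq_map_val]

def toNatPartition {n : ℕ} (l : JPartition) (hl : psize l = n) : n.Partition where
  parts := l.map PNat.val
  parts_pos := by
    intro i hi
    obtain ⟨j, -, rfl⟩ := Multiset.mem_map.1 hi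
    exact j.pos
  parts_sum := (psize_eq_sum_map_val l).symm.trans hl

lemma finite_setOf_psize_eq (n : ℕ) : {l : JPartition | psize l = n}.Finite := by
  have hinj :
      Function.Injective fun l : {l : JPartition // psize l = n} => toNatPartition l.1 l.2 :=
    fun a b h => Subtype.ext (Multiset.map_injective PNat.coe_injective
      (congrArg Nat.Partition.parts h))
  exact Set.finite_coe_iff.1 (Finite.of_injective _ hinj)

def partitionsOfSize (n : ℕ) : Finset JPartition := (finite_setOf_psize_eq n).toFinset

@[simp]
lemma mem_partitionsOfSize {n : ℕ} {l : JPartition} : l ∈ partitionsOfSize n ↔ psize l = n :=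
  Set.Finite.mem_toFinset _

lemma exists_addOnes_eq_iff {π' π : JPartition} :
    (∃ k, addOnes π' k = π) ↔ psize π' ≤ psize π ∧ addOnes π' (psize π - psize π') = π := by
  constructor
  · rintro ⟨k, rfl⟩
    rw [psize_addOnes, Nat.add_sub_cancel_left]
    exact ⟨Nat.le_add_right _ _, rfl⟩
  · exact fun h => ⟨_, h.2⟩

lemma exists_addOnes_eq_iff_mem_image {π' π : JPartition} :
    (∃ k, addOnes π' k = π) ↔
      π' ∈ (Finset.range (pmult π 1 + 1)).image (addOnes (removeOnes π)) := by
  rw [Finset.mem_image]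
  constructor
  · rintro ⟨k, rfl⟩
    refine ⟨pmult π' 1, ?_, ?_⟩
    · rw [Finset.mem_range, pmult_addOnes_one]
      omega
    · rw [removeOnes_addOnes, addOnes_removeOnes]
  · rintro ⟨i, hi, rfl⟩
    refine ⟨pmult π 1 - i, ?_⟩
    rw [addOnes_addOnes, Nat.add_sub_cancel' (Nat.lt_succ_iff.1 (Finset.mem_range.1 hi)),
      addOnes_removeOnes]

lemma finsum_mul_ite_exists_addOnes_eq {R : Type*} [CommSemiring R] (π : JPartition)
    (φ : JPartition → R) :
    ∑ᶠ π', φ π' * (if ∃ k, addOnes π' k = π then (Nat.choose (pmult π 1) (pmult π' 1) : R)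
      else 0)
      = ∑ i ∈ Finset.range (pmult π 1 + 1),
          (Nat.choose (pmult π 1) i : R) * φ (addOnes (removeOnes π) i) := by
  have hpmult (i : ℕ) : pmult (addOnes (removeOnes π) i) 1 = i := by
    rw [pmult_addOnes_one, pmult_removeOnes, zero_add]
  simp_rw [exists_addOnes_eq_iff_mem_image, mul_ite, mul_zero]
  set S := (Finset.range (pmult π 1 + 1)).image (addOnes (removeOnes π))
  have hsupp : Function.support (fun π' => if π' ∈ S then
      φ π' * (Nat.choose (pmult π 1) (pmult π' 1) : R) else 0) ⊆ S :=
    Function.support_subset_iff'.2 fun _ h => if_neg h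
  rw [finsum_eq_sum_of_support_subset _ hsupp,
    Finset.sum_ite_mem, Finset.inter_self,
    Finset.sum_image fun a _ b _ hab => by simpa [hpmult] using congrArg (pmult · 1) hab]
  exact Finset.sum_congr rfl fun i _ => by rw [hpmult, mul_comm]

section PowerSumProducts

open MvPolynomial

variable {σ R : Type*} [Fintype σ] [CommSemiring R]

lemma isHomogeneous_psum (a : ℕ) : (psum σ R a).IsHomogeneous a :=
  IsHomogeneous.sum _ _ _ fun j _ => isHomogeneous_X_pow j a

lemma isHomogeneous_prod_map_psum (s : Multiset ℕ) :
    ((s.map (psum σ R)).prod).IsHomogeneous s.sum := by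
  induction s using Multiset.induction_on with
  | empty => simpa using isHomogeneous_one σ R
  | cons a s ih => simpa using (isHomogeneous_psum a).mul ih

lemma map_prod_map_psum {S : Type*} [CommSemiring S] (f : R →+* S) (s : Multiset ℕ) :
    map f ((s.map (psum σ R)).prod) = (s.map (psum σ S)).prod := by
  have hpsum (a : ℕ) : map f (psum σ R a) = psum σ S a := by simp [psum]
  simp [map_multiset_prod, Multiset.map_map, hpsum]

lemma exists_eq_single_add_of_coeff_psum_mul_ne_zero {a : ℕ} {p : MvPolynomial σ R}
    {e : σ →₀ ℕ} (h : coeff e (psum σ R a * p) ≠ 0) :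
    ∃ j v, e = Finsupp.single j a + v ∧ coeff v p ≠ 0 := by
  rw [coeff_mul] at h
  obtain ⟨⟨u, v⟩, huv, hne⟩ := Finset.exists_ne_zero_of_sum_ne_zero h
  rw [Finset.HasAntidiagonal.mem_antidiagonal] at huv
  have hu : coeff u (psum σ R a) ≠ 0 := left_ne_zero_of_mul hne
  simp only [psum, coeff_sum, X_pow_eq_monomial, coeff_monomial] at hu
  obtain ⟨j, -, hj⟩ := Finset.exists_ne_zero_of_sum_ne_zero hu
  refine ⟨j, v, ?_, right_ne_zero_of_mul hne⟩
  rw [← huv, of_not_not (fun h' => hj (if_neg h'))]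

lemma card_support_le_of_coeff_prod_map_psum_ne_zero {s : Multiset ℕ} (hs : ∀ a ∈ s, 0 < a)
    {e : σ →₀ ℕ} (h : coeff e ((s.map (psum σ R)).prod) ≠ 0) :
    e.support.card ≤ Multiset.card s ∧
      (e.support.card = Multiset.card s → e.support.val.map e = s) := by
  induction s using Multiset.induction_on generalizing e with
  | empty =>
    have he : e = 0 := by
      by_contra he
      simp [coeff_one, Ne.symm he] at h
    simp [he]
  | cons a s ih =>
    rw [Multiset.map_cons, Multiset.prod_cons] at h
    obtain ⟨j, v, rfl, hv⟩ := exists_eq_single_add_of_coeff_psum_mul_ne_zero h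
    obtain ⟨hvle, hveq⟩ := ih (fun b hb => hs b (Multiset.mem_cons_of_mem hb)) hv
    have ha : a ≠ 0 := (hs a (Multiset.mem_cons_self a s)).ne'
    rw [Multiset.card_cons]
    by_cases hj : j ∈ v.support
    · have hsub : (Finsupp.single j a + v).support ⊆ v.support :=
        Finsupp.support_add.trans (Finset.union_subset
          (Finsupp.support_single_subset.trans (Finset.singleton_subset_iff.2 hj)) subset_rfl)
      have := Finset.card_le_card hsub
      exact ⟨by omega, fun h' => by omega⟩
    · have hsupp : (Finsupp.single j a + v).support = insert j v.support := by
        rw [Finsupp.support_add_eq (by simpa [Finsupp.support_single j ha] using hj),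
          Finsupp.support_single j ha, Finset.insert_eq]
      rw [hsupp, Finset.card_insert_of_notMem hj]
      refine ⟨by omega, fun h' => ?_⟩
      have hoff : ∀ x ∈ v.support.val, (Finsupp.single j a + v) x = v x := fun x hx => by
        simp [show j ≠ x from fun h => hj (h ▸ hx)]
      rw [Finset.insert_val_of_notMem hj, Multiset.map_cons, Multiset.map_congr rfl hoff,
        hveq (by omega)]
      simp [Finsupp.notMem_support_iff.1 hj]

lemma coeff_sum_single_prod_map_psum_pos (l : List (ℕ × σ)) :
    0 < coeff (l.map fun p => Finsupp.single p.2 p.1).sum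
      (((l.map Prod.fst : Multiset ℕ).map (psum σ ℕ)).prod) := by
  induction l with
  | nil => simp
  | cons p l ih =>
    simp only [List.map_cons, List.sum_cons, ← Multiset.cons_coe, Multiset.map_cons,
      Multiset.prod_cons, coeff_mul]
    refine Finset.sum_pos' (fun _ _ => Nat.zero_le _)
      ⟨(Finsupp.single p.2 p.1, (l.map fun p => Finsupp.single p.2 p.1).sum),
        Finset.HasAntidiagonal.mem_antidiagonal.2 rfl, ?_⟩
    refine Nat.mul_pos ?_ ih
    simp only [psum, coeff_sum, X_pow_eq_monomial, coeff_monomial]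
    exact Finset.sum_pos' (fun _ _ => Nat.zero_le _) ⟨p.2, Finset.mem_univ _, by simp⟩

end PowerSumProducts

section Homogeneity

open MvPolynomial

lemma coe_sortedParts (l : JPartition) : (sortedParts l : Multiset ℕ) = l.map PNat.val := by
  rw [sortedParts, Multiset.coe_reverse, Multiset.sort_eq, map_coe_eq_map_val]

lemma length_sortedParts (l : JPartition) : (sortedParts l).length = plen l := by
  simpa [plen] using congrArg Multiset.card (coe_sortedParts l)

lemma pos_of_mem_sortedParts {l : JPartition} {a : ℕ} (h : a ∈ sortedParts l) : 0 < a := by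
  rw [← Multiset.mem_coe, coe_sortedParts] at h
  obtain ⟨i, -, rfl⟩ := Multiset.mem_map.1 h
  exact i.pos

variable {mu : JPartition} {N : ℕ}

lemma xexp_castLE (h : (sortedParts mu).length ≤ N) (k : Fin (sortedParts mu).length) :
    xexp mu N (Fin.castLE h k) = (sortedParts mu)[k] := by
  simp [xexp]

lemma support_xexp (h : (sortedParts mu).length ≤ N) :
    (xexp mu N).support = Finset.univ.map (Fin.castLEEmb h) := by
  ext j
  rw [Finsupp.mem_support_iff, Finset.mem_map]
  constructor
  · intro hj
    have hlt : (j : ℕ) < (sortedParts mu).length := by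
      by_contra hge
      exact hj (by simp [xexp, List.getElem?_eq_none (not_lt.1 hge)])
    exact ⟨⟨j, hlt⟩, Finset.mem_univ _, rfl⟩
  · rintro ⟨k, -, rfl⟩
    rw [Fin.castLEEmb_apply, xexp_castLE]
    exact (pos_of_mem_sortedParts (List.getElem_mem _)).ne'

lemma map_xexp_support_val (h : plen mu ≤ N) :
    (xexp mu N).support.val.map (xexp mu N) = mu.map PNat.val := by
  rw [← length_sortedParts] at h
  rw [support_xexp h, Finset.map_val, Multiset.map_map, ← coe_sortedParts]
  conv_rhs => rw [← List.ofFn_getElem (xs := sortedParts mu), ← Fin.univ_val_map]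
  exact Multiset.map_congr rfl fun k _ => xexp_castLE h k

lemma card_support_xexp (h : plen mu ≤ N) : (xexp mu N).support.card = plen mu := by
  simpa [plen] using congrArg Multiset.card (map_xexp_support_val h)

lemma degree_xexp (h : plen mu ≤ N) : (xexp mu N).degree = psize mu := by
  rw [Finsupp.degree_apply, Finset.sum, map_xexp_support_val h, psize_eq_sum_map_val]

lemma xexp_eq_sum_single (h : (sortedParts mu).length ≤ N) :
    xexp mu N = ∑ k : Fin (sortedParts mu).length,
      Finsupp.single (Fin.castLE h k) (sortedParts mu)[k] := by
  ext j
  rw [Finsupp.finsetSum_apply]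
  by_cases hj : j ∈ (xexp mu N).support
  · rw [support_xexp h, Finset.mem_map] at hj
    obtain ⟨k, -, rfl⟩ := hj
    rw [Finset.sum_eq_single k (fun k' _ hk' => by simp [Fin.castLE_inj, hk']) (by simp)]
    simp [xexp_castLE]
  · rw [Finsupp.notMem_support_iff.1 hj, eq_comm]
    refine Finset.sum_eq_zero fun k _ => Finsupp.single_eq_of_ne fun hk => hj ?_
    rw [support_xexp h]
    exact Finset.mem_map.2 ⟨k, Finset.mem_univ _, hk.symm⟩

lemma prod_map_toPart {M : Type*} [CommMonoid M] (m : Exp) (f : ℕ+ → M) :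
    ((toPart m).map f).prod = m.prod fun i k => f i ^ k := by
  induction m using Finsupp.induction with
  | zero => simp [toPart]
  | single_add i k m him hk ih =>
    rw [toPart_add, toPart_single, Multiset.map_add, Multiset.prod_add, Multiset.map_replicate,
      Multiset.prod_replicate, ih, Finsupp.prod_add_index' (fun _ => pow_zero _)
      (fun _ _ _ => pow_add _ _ _)]
    exact congrArg (· * _)
      (Finsupp.prod_single_index (h := fun a b => f a ^ b) (pow_zero _)).symm

lemma evalN_monomial_one (m : Exp) :
    evalN N (monomial m 1) = ((((toPart m).map PNat.val).map (psum (Fin N) F))).prod := by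
  rw [evalN, aeval_monomial, map_one, one_mul, Multiset.map_map, prod_map_toPart]
  rfl

lemma coeff_evalN (e : Fin N →₀ ℕ) (f : SymA) :
    coeff e (evalN N f) = ∑ m ∈ f.support, coeff m f * coeff e (evalN N (monomial m 1)) := by
  conv_lhs => rw [← support_sum_monomial_coeff f]
  simp only [map_sum, coeff_sum]
  refine Finset.sum_congr rfl fun m _ => ?_
  have hsmul : monomial m (coeff m f) = coeff m f • monomial m 1 := by
    rw [smul_monomial, smul_eq_mul, mul_one]
  rw [hsmul, map_smul, coeff_smul, smul_eq_mul]

lemma coeff_xexp_evalN_monomial_toExp_ne_zero (h : plen mu ≤ N) :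
    coeff (xexp mu N) (evalN N (monomial (toExp mu) 1)) ≠ 0 := by
  rw [← length_sortedParts] at h
  let l : List (ℕ × Fin N) := List.ofFn fun k => ((sortedParts mu)[k], Fin.castLE h k)
  have hexp : (l.map fun p => Finsupp.single p.2 p.1).sum = xexp mu N := by
    rw [List.map_ofFn, List.sum_ofFn, xexp_eq_sum_single h]
    rfl
  have hparts : (l.map Prod.fst : Multiset ℕ) = mu.map PNat.val := by
    rw [List.map_ofFn, ← coe_sortedParts]
    exact congrArg _ (List.ofFn_getElem)
  have hpos := coeff_sum_single_prod_map_psum_pos l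
  rw [hexp, hparts] at hpos
  rw [evalN_monomial_one, toPart_toExp, ← map_prod_map_psum (Nat.castRingHom F), coeff_map]
  simpa using hpos.ne'

lemma coeff_xexp_evalN_monomial_eq_zero (h : plen mu ≤ N) {m : Exp} (hm : m ≠ toExp mu)
    (hlen : wt m = psize mu → plen (toPart m) ≤ plen mu) :
    coeff (xexp mu N) (evalN N (monomial m 1)) = 0 := by
  by_contra hne
  rw [evalN_monomial_one] at hne
  have hwt : wt m = psize mu := by
    by_contra hwt
    refine hne ((isHomogeneous_prod_map_psum _).coeff_eq_zero ?_)
    rwa [degree_xexp h, ← psize_eq_sum_map_val, psize_toPart, ne_comm]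
  have hpos : ∀ a ∈ (toPart m).map PNat.val, 0 < a := fun a ha => by
    obtain ⟨i, -, rfl⟩ := Multiset.mem_map.1 ha
    exact i.pos
  obtain ⟨hle, heq⟩ := card_support_le_of_coeff_prod_map_psum_ne_zero hpos hne
  rw [card_support_xexp h, Multiset.card_map] at hle heq
  rw [map_xexp_support_val h] at heq
  have hparts := Multiset.map_injective PNat.coe_injective (heq (le_antisymm hle (hlen hwt)))
  exact hm (by rw [hparts, toExp_toPart])

/-- If `J_λ` had a term `p_ρ` of degree `|ρ| ≠ |λ|`, take one with `ℓ(ρ)` maximal: then `x^ρ`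
occurs in `J_λ(x₁, …, x_N)` only through `p_ρ`, against triangularity since `ρ ⋬ λ`. -/
theorem IsJackFamily.coeff_eq_zero_of_wt_ne {J : JPartition → SymA} (hJ : IsJackFamily J)
    {l : JPartition} {m : Exp} (hm : wt m ≠ psize l) : coeff m (J l) = 0 := by
  by_contra hc
  let S := ((J l).support.filter fun m' => wt m' = wt m).image toPart
  have hmemS : ∀ m' ∈ (J l).support, wt m' = wt m → toPart m' ∈ S := fun m' hm' hw =>
    Finset.mem_image_of_mem _ (Finset.mem_filter.2 ⟨hm', hw⟩)
  obtain ⟨ρ, hρS, hmax⟩ := S.exists_max_image plen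
    ⟨_, hmemS m (mem_support_iff.2 hc) rfl⟩
  obtain ⟨m₀, hm₀, rfl⟩ := Finset.mem_image.1 hρS
  rw [Finset.mem_filter, mem_support_iff] at hm₀
  have hρ : psize (toPart m₀) = wt m := by rw [psize_toPart, hm₀.2]
  set N := psize l + psize (toPart m₀) + plen (toPart m₀)
  have hN : plen (toPart m₀) ≤ N := by omega
  have htri := hJ.triangular l (toPart m₀) fun hdom => hm (hρ ▸ hdom.1)
  rw [coeff_evalN, Finset.sum_eq_single_of_mem m₀ (mem_support_iff.2 hm₀.1)] at htri
  · refine mul_ne_zero hm₀.1 ?_ htri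
    simpa [toExp_toPart] using coeff_xexp_evalN_monomial_toExp_ne_zero hN
  · intro m' hm' hne
    refine mul_eq_zero_of_right _ (coeff_xexp_evalN_monomial_eq_zero hN ?_ fun hw => ?_)
    · rwa [toExp_toPart]
    · exact hmax _ (hmemS m' hm' (hw.trans hρ))

end Homogeneity

lemma liouvilleNumber_three_pos : 0 < liouvilleNumber 3 := by
  rw [← LiouvilleNumber.partialSum_add_remainder (by norm_num) 0]
  have hrem := LiouvilleNumber.remainder_pos (m := 3) (by norm_num) 0
  have hpartial : 0 < LiouvilleNumber.partialSum 3 0 := by norm_num [LiouvilleNumber.partialSum]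
  positivity

lemma transcendental_liouvilleNumber_three : Transcendental ℚ (liouvilleNumber 3) := fun h =>
  transcendental_liouvilleNumber (m := 3) (by norm_num)
    ((IsFractionRing.isAlgebraic_iff ℤ ℚ ℝ).2 h)

/-- `α ↦` a positive transcendental real: under this embedding of `ℚ(α)` the Hall product
becomes positive definite. -/
def specialization : F →ₐ[ℚ] ℝ :=
  IsFractionRing.liftAlgHom (transcendental_iff_injective.mp transcendental_liouvilleNumber_three)

lemma specialization_alpha : specialization alpha = liouvilleNumber 3 := by
  rw [alpha, ← RatFunc.algebraMap_X (K := ℚ), specialization, IsFractionRing.liftAlgHom_apply,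
    IsFractionRing.lift_algebraMap]
  simp

lemma specialization_zalpha_pos (m : Exp) : 0 < specialization (zalpha m) := by
  rw [zalpha, map_mul, map_pow, specialization_alpha, AlgHom.commutes, eq_ratCast]
  refine mul_pos ?_ (pow_pos liouvilleNumber_three_pos _)
  exact_mod_cast Finset.prod_pos fun i _ => by positivity

lemma zalpha_ne_zero (m : Exp) : zalpha m ≠ 0 := fun h =>
  (specialization_zalpha_pos m).ne' (by rw [h, map_zero])

lemma hall_self_ne_zero_of_ne_zero {f : SymA} (hf : f ≠ 0) : hall f f ≠ 0 := by
  obtain ⟨m₀, hm₀⟩ := MvPolynomial.ne_zero_iff.1 hf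
  have hpos : 0 < specialization (hall f f) := by
    rw [hall, map_sum]
    refine Finset.sum_pos' (fun m _ => ?_) ⟨m₀, MvPolynomial.mem_support_iff.2 hm₀, ?_⟩
    · rw [map_mul, map_mul, ← sq]
      exact mul_nonneg (sq_nonneg _) (specialization_zalpha_pos m).le
    · rw [map_mul, map_mul, ← sq]
      have hspec := (map_ne_zero specialization).2 hm₀
      exact mul_pos (by positivity) (specialization_zalpha_pos m₀)
  exact fun h => hpos.ne' (by rw [h, map_zero])

theorem Matrix.transpose_mul_diagonal_inv_mul_eq_diagonal_inv {ι K : Type*} [Fintype ι]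
    [DecidableEq ι] [Field K] {A : Matrix ι ι K} {z d : ι → K} (hz : ∀ i, z i ≠ 0)
    (hd : ∀ i, d i ≠ 0) (h : A * Matrix.diagonal z * A.transpose = Matrix.diagonal d) :
    A.transpose * Matrix.diagonal d⁻¹ * A = Matrix.diagonal z⁻¹ := by
  have hdiag {v : ι → K} (hv : ∀ i, v i ≠ 0) : Matrix.diagonal v * Matrix.diagonal v⁻¹ = 1 := by
    rw [Matrix.diagonal_mul_diagonal, ← Matrix.diagonal_one]
    exact congrArg _ (funext fun i => mul_inv_cancel₀ (hv i))
  have hright : A * (Matrix.diagonal z * A.transpose * Matrix.diagonal d⁻¹) = 1 := by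
    rw [← Matrix.mul_assoc, ← Matrix.mul_assoc, h, hdiag hd]
  have hleft := mul_eq_one_comm.mp hright
  calc A.transpose * Matrix.diagonal d⁻¹ * A
      = Matrix.diagonal z⁻¹ * (Matrix.diagonal z * A.transpose * Matrix.diagonal d⁻¹ * A) := by
        rw [← Matrix.mul_assoc, ← Matrix.mul_assoc, ← Matrix.mul_assoc,
          mul_eq_one_comm.mp (hdiag hz), Matrix.one_mul, Matrix.mul_assoc]
    _ = Matrix.diagonal z⁻¹ := by rw [hleft, Matrix.mul_one]

lemma theta_of_psize_le (J : JPartition → SymA) {mu th : JPartition} (h : psize mu ≤ psize th) :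
    theta J mu th = (Nat.choose (pmult mu 1 + (psize th - psize mu)) (pmult mu 1) : F) *
      MvPolynomial.coeff (toExp (addOnes mu (psize th - psize mu))) (J th) := by
  rw [theta, if_neg (not_lt.2 h), add_comm]

def dualWeight (J : JPartition → SymA) (π θ : JPartition) : F :=
  zalpha (toExp π) * (hall (J θ) (J θ))⁻¹ * MvPolynomial.coeff (toExp π) (J θ)

namespace IsJackFamily

variable {J : JPartition → SymA}

lemma hall_self_ne_zero (hJ : IsJackFamily J) (l : JPartition) : hall (J l) (J l) ≠ 0 :=
  hall_self_ne_zero_of_ne_zero fun h => one_ne_zero (α := F) (by simpa [h] using hJ.normalized l)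

lemma hall_eq_sum (hJ : IsJackFamily J) {n : ℕ} {θ : JPartition} (hθ : psize θ = n)
    (η : JPartition) :
    hall (J θ) (J η) = ∑ π ∈ partitionsOfSize n,
      MvPolynomial.coeff (toExp π) (J θ) * MvPolynomial.coeff (toExp π) (J η) *
        zalpha (toExp π) := by
  rw [hall, ← Finset.sum_image (f := fun m => MvPolynomial.coeff m (J θ) *
    MvPolynomial.coeff m (J η) * zalpha m) fun a _ b _ hab => toExp_injective hab]
  refine Finset.sum_subset (fun m hm => ?_) fun m _ hm => ?_
  · refine Finset.mem_image.2 ⟨toPart m, ?_, toExp_toPart m⟩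
    rw [mem_partitionsOfSize, psize_toPart, ← hθ]
    by_contra hwt
    exact MvPolynomial.mem_support_iff.1 hm (hJ.coeff_eq_zero_of_wt_ne hwt)
  · rw [MvPolynomial.notMem_support_iff.1 hm, zero_mul, zero_mul]

theorem sum_inv_hall_mul_coeff_mul_coeff (hJ : IsJackFamily J) {n : ℕ} {π ρ : JPartition}
    (hπ : psize π = n) (hρ : psize ρ = n) :
    ∑ θ ∈ partitionsOfSize n, (hall (J θ) (J θ))⁻¹ * MvPolynomial.coeff (toExp π) (J θ) *
        MvPolynomial.coeff (toExp ρ) (J θ)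
      = if π = ρ then (zalpha (toExp π))⁻¹ else 0 := by
  let A : Matrix (partitionsOfSize n) (partitionsOfSize n) F :=
    fun θ π => MvPolynomial.coeff (toExp π.1) (J θ.1)
  have hrows : A * Matrix.diagonal (fun π => zalpha (toExp π.1)) * A.transpose
      = Matrix.diagonal fun θ => hall (J θ.1) (J θ.1) := by
    ext θ η
    rw [Matrix.mul_apply, Matrix.diagonal_apply]
    simp only [Matrix.mul_diagonal, Matrix.transpose_apply]
    rw [Finset.sum_coe_sort (f := fun π => MvPolynomial.coeff (toExp π) (J θ.1) *
      zalpha (toExp π) * MvPolynomial.coeff (toExp π) (J η.1))]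
    have hsum := hJ.hall_eq_sum (mem_partitionsOfSize.1 θ.2) η.1
    rw [Finset.sum_congr rfl fun _ _ => mul_right_comm _ _ _, ← hsum]
    split_ifs with hθη
    · rw [hθη]
    · exact hJ.orthogonal _ _ fun h => hθη (Subtype.ext h)
  have hcols := congrFun (congrFun (Matrix.transpose_mul_diagonal_inv_mul_eq_diagonal_inv
    (fun _ => zalpha_ne_zero _) (fun θ : partitionsOfSize n => hJ.hall_self_ne_zero θ.1) hrows)
    ⟨π, mem_partitionsOfSize.2 hπ⟩) ⟨ρ, mem_partitionsOfSize.2 hρ⟩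
  rw [Matrix.mul_apply, Matrix.diagonal_apply] at hcols
  simp only [Matrix.mul_diagonal, Matrix.transpose_apply, Pi.inv_apply, Subtype.mk.injEq] at hcols
  rw [← Finset.sum_coe_sort, ← hcols]
  exact Finset.sum_congr rfl fun θ _ => by ring

lemma sum_dualWeight_mul_coeff (hJ : IsJackFamily J) {π ρ : JPartition}
    (hρ : psize ρ = psize π) :
    ∑ θ ∈ partitionsOfSize (psize π), dualWeight J π θ * MvPolynomial.coeff (toExp ρ) (J θ)
      = if π = ρ then 1 else 0 := by
  have hfactor : ∑ θ ∈ partitionsOfSize (psize π),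
      dualWeight J π θ * MvPolynomial.coeff (toExp ρ) (J θ)
      = zalpha (toExp π) * ∑ θ ∈ partitionsOfSize (psize π), (hall (J θ) (J θ))⁻¹ *
          MvPolynomial.coeff (toExp π) (J θ) * MvPolynomial.coeff (toExp ρ) (J θ) := by
    rw [Finset.mul_sum]
    exact Finset.sum_congr rfl fun θ _ => by rw [dualWeight]; ring
  rw [hfactor, hJ.sum_inv_hall_mul_coeff_mul_coeff rfl hρ]
  split_ifs
  · exact mul_inv_cancel₀ (zalpha_ne_zero _)
  · exact mul_zero _

lemma sum_dualWeight_mul_theta (hJ : IsJackFamily J) (π π' : JPartition) :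
    ∑ θ ∈ partitionsOfSize (psize π), dualWeight J π θ * theta J π' θ
      = if ∃ k, addOnes π' k = π then (Nat.choose (pmult π 1) (pmult π' 1) : F) else 0 := by
  rw [exists_addOnes_eq_iff]
  by_cases hle : psize π' ≤ psize π
  · have hρ : psize (addOnes π' (psize π - psize π')) = psize π := by
      rw [psize_addOnes]
      omega
    have htheta : ∀ θ ∈ partitionsOfSize (psize π), theta J π' θ =
        (Nat.choose (pmult π' 1 + (psize π - psize π')) (pmult π' 1) : F) *
          MvPolynomial.coeff (toExp (addOnes π' (psize π - psize π'))) (J θ) := fun θ hθ => by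
      rw [theta_of_psize_le J ((mem_partitionsOfSize.1 hθ).symm ▸ hle), mem_partitionsOfSize.1 hθ]
    rw [Finset.sum_congr rfl fun θ hθ => by rw [htheta θ hθ, mul_left_comm], ← Finset.mul_sum,
      hJ.sum_dualWeight_mul_coeff hρ]
    by_cases heq : addOnes π' (psize π - psize π') = π
    · rw [if_pos heq.symm, if_pos ⟨hle, heq⟩, mul_one, ← pmult_addOnes_one, heq]
    · rw [if_neg (Ne.symm heq), if_neg fun h => heq h.2, mul_zero]
  · rw [if_neg fun h => hle h.1]
    refine Finset.sum_eq_zero fun θ hθ => ?_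
    rw [theta, if_pos (by rw [mem_partitionsOfSize.1 hθ]; omega), mul_zero]

end IsJackFamily

lemma IsStructCoeffs.sum_mul_theta_mul_theta {J : JPartition → SymA}
    {g : JPartition → JPartition → JPartition → F} (hg : IsStructCoeffs J g)
    (s : Finset JPartition) (w : JPartition → F) (mu nu : JPartition) :
    ∑ θ ∈ s, w θ * (theta J mu θ * theta J nu θ)
      = ∑ᶠ π', g π' mu nu * ∑ θ ∈ s, w θ * theta J π' θ := by
  simp_rw [hg.2, mul_finsum, Finset.mul_sum]
  rw [sum_finsum_comm]
  · exact finsum_congr fun π' => Finset.sum_congr rfl fun θ _ => by ring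
  · exact fun θ _ => (hg.1 mu nu).subset fun π' h => left_ne_zero_of_mul (right_ne_zero_of_mul h)

lemma IsConnCoeffs.choose_mul_choose_mul {J : JPartition → SymA}
    {c : JPartition → JPartition → JPartition → F} (hc : IsConnCoeffs J c)
    {pi mu nu : JPartition} (hmu : psize mu ≤ psize pi) (hnu : psize nu ≤ psize pi) :
    (Nat.choose (pmult mu 1 + (psize pi - psize mu)) (pmult mu 1) : F) *
        (Nat.choose (pmult nu 1 + (psize pi - psize nu)) (pmult nu 1) : F) *
        c pi (addOnes mu (psize pi - psize mu)) (addOnes nu (psize pi - psize nu))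
      = ∑ θ ∈ partitionsOfSize (psize pi), dualWeight J pi θ * (theta J mu θ * theta J nu θ) := by
  rw [hc _ _ _ (by rw [psize_addOnes]; omega) (by rw [psize_addOnes]; omega),
    finsum_eq_sum_of_support_subset _ (s := partitionsOfSize (psize pi))
      fun θ h => mem_partitionsOfSize.2 (by_contra fun h' => h (if_neg h')),
    Finset.mul_sum, Finset.mul_sum]
  refine Finset.sum_congr rfl fun θ hθ => ?_
  rw [if_pos (mem_partitionsOfSize.1 hθ), dualWeight,
    theta_of_psize_le J ((mem_partitionsOfSize.1 hθ).symm ▸ hmu),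
    theta_of_psize_le J ((mem_partitionsOfSize.1 hθ).symm ▸ hnu), mem_partitionsOfSize.1 hθ]
  ring

/-- **Proposition 3.5.** For all partitions `π ⊢ n` and `μ, ν` with `|μ|, |ν| ≤ n`:
`∑_{i=0}^{m₁(π)} C(m₁(π), i) g^{π̃∪1^i}_{μ,ν}
  = C(m₁(μ)+n-|μ|, m₁(μ)) C(m₁(ν)+n-|ν|, m₁(ν)) c^π_{μ∪1^{n-|μ|}, ν∪1^{n-|ν|}}`. -/
theorem statement6
    (J : JPartition → SymA) (hJ : IsJackFamily J)
    (g : JPartition → JPartition → JPartition → F) (hg : IsStructCoeffs J g)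
    (c : JPartition → JPartition → JPartition → F) (hc : IsConnCoeffs J c)
    (pi mu nu : JPartition) (n : ℕ) (hn : psize pi = n)
    (hmu : psize mu ≤ n) (hnu : psize nu ≤ n) :
    ∑ i ∈ Finset.range (pmult pi 1 + 1),
        (Nat.choose (pmult pi 1) i : F) * g (addOnes (removeOnes pi) i) mu nu
      = (Nat.choose (pmult mu 1 + (n - psize mu)) (pmult mu 1) : F) *
        (Nat.choose (pmult nu 1 + (n - psize nu)) (pmult nu 1) : F) *
        c pi (addOnes mu (n - psize mu)) (addOnes nu (n - psize nu)) := by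
  subst hn
  rw [hc.choose_mul_choose_mul hmu hnu, hg.sum_mul_theta_mul_theta]
  simp_rw [hJ.sum_dualWeight_mul_theta]
  exact (finsum_mul_ite_exists_addOnes_eq pi fun π' => g π' mu nu).symm

end
end

section
/- For any ℓ ≥ 1, the operators C_{ℓ,0}^{(α)} and C_{ℓ,1}^{(α)} admit the differential expressions: C_{ℓ,0}^{(α)} = p_ℓ/α (operator of multiplication by p_ℓ/α), and C_{ℓ,1}^{(α)} = C(ℓ+1,2)·(b/α)·p_{ℓ+1} + (ℓ+1)∑_{m≥1} p_{m+ℓ+1} (m ∂/∂p_m) + ((ℓ+1)/(2α)) ∑_{1≤i≤ℓ} p_i p_{ℓ+1−i}, where b := α−1. -/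
/-!
Every polynomial met along the way is linear in the catalytic variables. Writing `q̂` for
`q ∈ ℚ(α)[p]` seen in `PY`, `Y₊` sends `y_m q̂` to `y_{m+1} q̂`, `Θ_Y` followed by `y ↦ 0`
sends it to `p_m q` (with `p_0 = 0`), and
`Γ_Y (y_b q̂) = α ∑_j j y_{b+1+j} ∂_j q̂ + ∑_{c+j=b} y_{c+1} p_j q̂ + (α-1) b y_{b+1} q̂`.
Splitting words by their last letter, the `u^ℓ`-part of `(Γ_Y + u Y₊)^ℓ` is `Y₊^ℓ`, which
gives `p_ℓ/α`, and that of `(Γ_Y + u Y₊)^{ℓ+1}` is `∑_{a+b=ℓ} Y₊^a Γ_Y Y₊^b`. Summed over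
`a + b = ℓ`, the derivative part of `Γ_Y` does not depend on `a`, the last part contributes
`∑ b = C(ℓ+1,2)`, and the middle part produces `p_i p_{ℓ+1-i}` exactly `i` times, which the
symmetry `i ↔ ℓ+1-i` averages to `(ℓ+1)/2`.
-/

open scoped Classical

noncomputable section

/-- The polynomial algebra `ℚ(α)[p₁,p₂,…][y₀,y₁,…]` containing the catalytic variables. -/
abbrev PY : Type := MvPolynomial (ℕ+ ⊕ ℕ) F

/-- The variable `p_i` inside `PY`. -/
def pv (i : ℕ+) : PY := MvPolynomial.X (Sum.inl i)

/-- The catalytic variable `y_j` inside `PY`. -/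
def yv (j : ℕ) : PY := MvPolynomial.X (Sum.inr j)

/-- The operator `Y₊ = ∑_{i≥0} y_{i+1} ∂/∂y_i`. -/
def Yplus (f : PY) : PY := ∑ᶠ j : ℕ, yv (j + 1) * MvPolynomial.pderiv (Sum.inr j) f

/-- The operator
`Γ_Y = (1+b) ∑_{i,j≥1} y_{i+j} j ∂²/(∂y_{i-1}∂p_j) + ∑_{i,j≥1} y_i p_j ∂/∂y_{i+j-1}
      + b ∑_{i≥1} y_{i+1} i ∂/∂y_i`, with `b = α - 1`. -/
def GammaY (f : PY) : PY :=
  alpha • (∑ᶠ i : ℕ+, ∑ᶠ j : ℕ+, ((j : ℕ) : F) •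
      (yv ((i : ℕ) + (j : ℕ)) *
        MvPolynomial.pderiv (Sum.inl j) (MvPolynomial.pderiv (Sum.inr ((i : ℕ) - 1)) f)))
  + (∑ᶠ i : ℕ+, ∑ᶠ j : ℕ+,
      yv (i : ℕ) * pv j * MvPolynomial.pderiv (Sum.inr ((i : ℕ) + (j : ℕ) - 1)) f)
  + (alpha - 1) • (∑ᶠ i : ℕ+, ((i : ℕ) : F) •
      (yv ((i : ℕ) + 1) * MvPolynomial.pderiv (Sum.inr (i : ℕ)) f))

/-- The operator `Θ_Y = ∑_{i≥1} p_i ∂/∂y_i`. -/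
def ThetaY (f : PY) : PY := ∑ᶠ i : ℕ+, pv i * MvPolynomial.pderiv (Sum.inr (i : ℕ)) f

/-- Ordered composite of the operators `Y₊` (for `true`) and `Γ_Y` (for `false`). -/
def wordOp : List Bool → PY → PY
  | [], f => f
  | b :: w, f => (if b then Yplus else GammaY) (wordOp w f)

/-- Projection `PY → SymA` killing the catalytic variables. -/
def dropY : PY →ₐ[F] SymA :=
  MvPolynomial.aeval fun v => match v with
    | Sum.inl i => MvPolynomial.X i
    | Sum.inr _ => 0

/-- `Bc n ℓ` is the coefficient of `u^ℓ` in the operator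
`B_n^{(α)}(p, u) = Θ_Y (Γ_Y + u Y₊)^n (y₀ / (1+b))`, viewed as an operator on `ℚ(α)[p]`. -/
def Bc (n ℓ : ℕ) (f : SymA) : SymA :=
  dropY (ThetaY (∑ s ∈ Finset.univ.filter
      (fun s : Fin n → Bool => (Finset.univ.filter fun i => s i = true).card = ℓ),
    wordOp (List.ofFn s) (alpha⁻¹ • (yv 0 * MvPolynomial.rename Sum.inl f))))

/-- Matrix entries of `Bc n ℓ` in the basis of power-sum monomials. -/
def Bmat (n ℓ : ℕ) (m m' : Exp) : F :=
  MvPolynomial.coeff m (Bc n ℓ (MvPolynomial.monomial m' 1))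

/-- The adjoint of `Bc n ℓ` with respect to the `α`-deformed Hall scalar product
(`⟨Bperp f, g⟩ = ⟨f, Bc g⟩`), given by its matrix in the power-sum basis. -/
def Bperp (n ℓ : ℕ) (f : SymA) : SymA :=
  ∑ m' ∈ f.support, MvPolynomial.coeff m' f •
    ∑ᶠ m : Exp, (Bmat n ℓ m' m * zalpha m' / zalpha m) • (MvPolynomial.monomial m (1 : F))



/-- The operator `C_{ℓ,k}^{(α)}(p) := (ℓ+k) [t^{k+ℓ}] C_ℓ^{(α)}(t,p)`, where
`C_ℓ^{(α)}(t,p) = [u^ℓ] B_∞^{(α)}(t,p,u)`; since the `t^n`-coefficient of `C_ℓ^{(α)}` is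
`(1/n) Bc n ℓ`, this is exactly the operator `Bc (ℓ+k) ℓ`. -/
def Clk (ℓ k : ℕ) (f : SymA) : SymA := Bc (ℓ + k) ℓ f

open MvPolynomial Finset Function

section FinsumPderiv

variable {R σ ι : Type*} [CommSemiring R]

theorem hasFiniteSupport_apply_pderiv {M : Type*} [Zero M] {e : ι → σ} (he : Injective e)
    (φ : ι → MvPolynomial σ R → M) (hφ : ∀ i, φ i 0 = 0) (f : MvPolynomial σ R) :
    HasFiniteSupport fun i => φ i (pderiv (e i) f) := by
  refine (f.vars.finite_toSet.preimage he.injOn).subset fun i hi => ?_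
  by_contra h
  exact hi (show φ i _ = 0 by rw [pderiv_eq_zero_of_notMem_vars h, hφ])

def finsumPderiv {e : ι → σ} (he : Injective e) (g : ι → MvPolynomial σ R) :
    MvPolynomial σ R →ₗ[R] MvPolynomial σ R where
  toFun f := ∑ᶠ i, g i * pderiv (e i) f
  map_add' f f' := by
    rw [← finsum_add_distrib (hasFiniteSupport_apply_pderiv he _ (fun i => mul_zero _) f)
      (hasFiniteSupport_apply_pderiv he _ (fun i => mul_zero _) f')]
    simp only [map_add, mul_add]
  map_smul' c f := by
    rw [RingHom.id_apply,
      smul_finsum' c (hasFiniteSupport_apply_pderiv he _ (fun i => mul_zero _) f)]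
    simp only [Derivation.map_smul, mul_smul_comm]

end FinsumPderiv

section PNatFinsum

variable {M : Type*} [AddCommMonoid M]

theorem finsum_pnat_ite_coe_eq (b : ℕ) (g : ℕ → M) (hg : g 0 = 0) :
    ∑ᶠ i : ℕ+, (if (i : ℕ) = b then g i else 0) = g b := by
  rcases b with _ | b
  · simp [hg]
  · rw [finsum_eq_single (fun i : ℕ+ => if (i : ℕ) = b + 1 then g i else 0) b.succPNat
      fun i hi => if_neg fun h => hi (PNat.coe_injective h)]
    simp

theorem finsum_pnat_eq_sum_range (φ : ℕ+ → M) (N : ℕ)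
    (h : ∀ i : ℕ+, N < i → φ i = 0) :
    ∑ᶠ i, φ i = ∑ k ∈ range N, φ k.succPNat := by
  rw [← finsum_comp_equiv Equiv.pnatEquivNat.symm]
  refine finsum_eq_sum_of_support_subset _ fun k hk => ?_
  by_contra hkN
  rw [coe_range, Set.mem_Iio, not_lt] at hkN
  exact hk (h _ (by rw [Equiv.pnatEquivNat_symm_apply, Nat.succPNat_coe]; omega))

theorem finsum_pnat_pnat_ite_add_eq (n : ℕ) (G : ℕ → ℕ → M) (hG : ∀ i, G i 0 = 0) :
    ∑ᶠ (i : ℕ+) (j : ℕ+), (if (i : ℕ) + j = n + 1 then G i j else 0) =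
      ∑ p ∈ antidiagonal n, G (p.1 + 1) p.2 := by
  have inner (i : ℕ+) : ∑ᶠ j : ℕ+, (if (i : ℕ) + j = n + 1 then G i j else 0) =
      G i (n + 1 - i) := by
    rw [← finsum_pnat_ite_coe_eq _ _ (hG i)]
    exact finsum_congr fun j => if_congr (by have := j.pos; omega) rfl rfl
  rw [finsum_congr inner, finsum_pnat_eq_sum_range _ (n + 1) fun i hi => by
      rw [Nat.sub_eq_zero_of_le hi.le, hG],
    Finset.Nat.sum_antidiagonal_eq_sum_range_succ fun a b => G (a + 1) b]
  exact Finset.sum_congr rfl fun k hk => by simp [Nat.add_sub_add_right]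

end PNatFinsum

namespace Finset.Nat

theorem sum_antidiagonal_sum_antidiagonal_snd {M : Type*} [AddCommMonoid M] (n : ℕ)
    (G : ℕ → ℕ → M) :
    ∑ p ∈ antidiagonal n, ∑ q ∈ antidiagonal p.2, G (p.1 + q.1) q.2 =
      ∑ p ∈ antidiagonal n, (p.1 + 1) • G p.1 p.2 := by
  induction n generalizing G with
  | zero => simp
  | succ n ih =>
    have := ih fun s j => G (s + 1) j
    simp only [sum_antidiagonal_succ, zero_add, add_right_comm _ 1] at this ⊢
    rw [this]
    simp only [succ_nsmul, Finset.sum_add_distrib, zero_smul, zero_add]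
    abel

theorem sum_antidiagonal_snd (n : ℕ) : ∑ p ∈ antidiagonal n, p.2 = (n + 1).choose 2 := by
  rw [← sum_antidiagonal_swap, sum_antidiagonal_eq_sum_range_succ_mk]
  simp [Finset.sum_range_id, Nat.choose_two_right]

theorem sum_antidiagonal_fst_smul_of_symm {K M : Type*} [Field K] [CharZero K]
    [AddCommGroup M] [Module K M] (n : ℕ) (H : ℕ → ℕ → M) (hH : ∀ i j, H i j = H j i) :
    ∑ p ∈ antidiagonal n, (p.1 : K) • H p.1 p.2 =
      ((n : K) / 2) • ∑ p ∈ antidiagonal n, H p.1 p.2 := by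
  have swap : ∑ p ∈ antidiagonal n, (p.1 : K) • H p.1 p.2 =
      ∑ p ∈ antidiagonal n, (p.2 : K) • H p.1 p.2 := by
    rw [← sum_antidiagonal_swap]
    simp only [Prod.fst_swap, Prod.snd_swap, hH]
  have two : (2 : K) • ∑ p ∈ antidiagonal n, (p.1 : K) • H p.1 p.2 =
      (n : K) • ∑ p ∈ antidiagonal n, H p.1 p.2 := by
    rw [two_smul]
    nth_rw 2 [swap]
    rw [← Finset.sum_add_distrib, Finset.smul_sum]
    refine Finset.sum_congr rfl fun p hp => ?_
    rw [← add_smul, ← Nat.cast_add, HasAntidiagonal.mem_antidiagonal.mp hp]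
  rw [div_eq_inv_mul, mul_smul, ← two, smul_smul, inv_mul_cancel₀ two_ne_zero, one_smul]

end Finset.Nat

theorem List.ofFn_snoc {α : Type*} {n : ℕ} (s : Fin n → α) (a : α) :
    List.ofFn (Fin.snoc s a : Fin (n + 1) → α) = List.ofFn s ++ [a] := by
  rw [List.ofFn_succ']
  simp

theorem Fin.card_filter_snoc_eq_true {n : ℕ} (s : Fin n → Bool) (b : Bool) :
    (Finset.univ.filter fun i => (Fin.snoc s b : Fin (n + 1) → Bool) i = true).card =
      (Finset.univ.filter fun i => s i = true).card + if b then 1 else 0 := by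
  simp only [Finset.card_filter, Fin.sum_univ_castSucc, Fin.snoc_castSucc, Fin.snoc_last]

theorem wordOp_append_singleton (w : List Bool) (b : Bool) (h : PY) :
    wordOp (w ++ [b]) h = wordOp w ((if b then Yplus else GammaY) h) := by
  induction w with
  | nil => rfl
  | cons c w ih => exact congrArg _ ih

def wordSum (n ℓ : ℕ) (h : PY) : PY :=
  ∑ s ∈ Finset.univ.filter
      (fun s : Fin n → Bool => (Finset.univ.filter fun i => s i = true).card = ℓ),
    wordOp (List.ofFn s) h

theorem Bc_eq_wordSum (n ℓ : ℕ) (f : SymA) :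
    Bc n ℓ f = dropY (ThetaY (wordSum n ℓ (alpha⁻¹ • (yv 0 * rename Sum.inl f)))) := rfl

/-- Peeling off the last letter, which acts first, needs no linearity of `Γ_Y`. -/
theorem wordSum_succ (n ℓ : ℕ) (h : PY) :
    wordSum (n + 1) ℓ h = wordSum n ℓ (GammaY h) +
      ∑ s ∈ Finset.univ.filter
          (fun s : Fin n → Bool => (Finset.univ.filter fun i => s i = true).card + 1 = ℓ),
        wordOp (List.ofFn s) (Yplus h) := by
  simp only [wordSum, Finset.sum_filter]
  rw [← (Fin.snocEquiv fun _ => Bool).sum_comp, Fintype.sum_prod_type, Fintype.sum_bool]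
  have snoc_eq (x : Bool × (Fin n → Bool)) :
      (Fin.snocEquiv fun _ => Bool) x = Fin.snoc x.2 x.1 := rfl
  simp only [snoc_eq, List.ofFn_snoc, Fin.card_filter_snoc_eq_true, wordOp_append_singleton]
  simp [add_comm]

theorem wordSum_succ_succ (n ℓ : ℕ) (h : PY) :
    wordSum (n + 1) (ℓ + 1) h = wordSum n (ℓ + 1) (GammaY h) + wordSum n ℓ (Yplus h) := by
  simp only [wordSum_succ, Nat.add_right_cancel_iff]
  rfl

theorem wordSum_succ_zero (n : ℕ) (h : PY) : wordSum (n + 1) 0 h = wordSum n 0 (GammaY h) := by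
  simp [wordSum_succ]

theorem wordSum_zero_zero (h : PY) : wordSum 0 0 h = h := by
  simp [wordSum, wordOp]

theorem wordSum_of_lt {n ℓ : ℕ} (hnℓ : n < ℓ) (h : PY) : wordSum n ℓ h = 0 := by
  refine Finset.sum_eq_zero fun s hs => absurd (Finset.mem_filter.mp hs).2 ?_
  exact (lt_of_le_of_lt (Finset.card_le_univ _) (by simpa using hnℓ)).ne

theorem wordSum_self (n : ℕ) (h : PY) : wordSum n n h = Yplus^[n] h := by
  induction n generalizing h with
  | zero => exact wordSum_zero_zero h
  | succ n ih =>
    rw [wordSum_succ_succ, wordSum_of_lt n.lt_succ_self, zero_add, ih, iterate_succ_apply]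

theorem wordSum_succ_self (n : ℕ) (h : PY) :
    wordSum (n + 1) n h = ∑ p ∈ antidiagonal n, Yplus^[p.1] (GammaY (Yplus^[p.2] h)) := by
  induction n generalizing h with
  | zero => simp [wordSum_succ_zero, wordSum_zero_zero]
  | succ n ih =>
    rw [wordSum_succ_succ, wordSum_self, ih, Finset.Nat.sum_antidiagonal_succ']
    simp [iterate_succ_apply]

/-- `p_m` for `m : ℕ`, with the junk value `p_0 = 0`, which lets antidiagonal sums absorb their
boundary terms. -/
def Xnat (m : ℕ) : SymA := if h : 0 < m then X ⟨m, h⟩ else 0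

@[simp]
theorem Xnat_zero : Xnat 0 = 0 := rfl

@[simp]
theorem Xnat_coe (i : ℕ+) : Xnat i = X i := dif_pos i.pos

def yplusLinear : PY →ₗ[F] PY := finsumPderiv Sum.inr_injective fun j => yv (j + 1)

def thetaYLinear : PY →ₗ[F] PY := finsumPderiv (Sum.inr_injective.comp PNat.coe_injective) pv

theorem ThetaY_eq_thetaYLinear : ThetaY = thetaYLinear := rfl

def thetaShift (a : ℕ) : PY →ₗ[F] SymA :=
  dropY.toLinearMap ∘ₗ thetaYLinear ∘ₗ yplusLinear ^ a

theorem thetaShift_apply (a : ℕ) (h : PY) : thetaShift a h = dropY (ThetaY (Yplus^[a] h)) := by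
  rw [thetaShift, LinearMap.comp_apply, LinearMap.comp_apply, Module.End.pow_apply]
  rfl

theorem pderiv_inr_yv_mul_rename (k m : ℕ) (q : SymA) :
    pderiv (Sum.inr k) (yv m * rename Sum.inl q) = if k = m then rename Sum.inl q else 0 := by
  have hq : pderiv (Sum.inr k) (rename Sum.inl q : PY) = 0 :=
    pderiv_eq_zero_of_notMem_vars fun hk => by simpa using vars_rename Sum.inl q hk
  simp [yv, pderiv_X, Pi.single_apply, hq, eq_comm]

theorem Yplus_iterate_yv_mul_rename (a m : ℕ) (q : SymA) :
    Yplus^[a] (yv m * rename Sum.inl q) = yv (m + a) * rename Sum.inl q := by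
  induction a with
  | zero => rfl
  | succ a ih =>
    rw [iterate_succ_apply', ih, Yplus,
      finsum_eq_single _ (m + a) fun k hk => by rw [pderiv_inr_yv_mul_rename, if_neg hk, mul_zero],
      pderiv_inr_yv_mul_rename, if_pos rfl, add_assoc]

theorem ThetaY_yv_mul_rename (m : ℕ) (q : SymA) :
    ThetaY (yv m * rename Sum.inl q) = rename Sum.inl (Xnat m * q) := by
  have hpv (i : ℕ+) : pv i * rename Sum.inl q = rename Sum.inl (Xnat i * q) := by
    rw [Xnat_coe, map_mul, rename_X, pv]
  simp only [ThetaY, pderiv_inr_yv_mul_rename, mul_ite, mul_zero, hpv]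
  exact finsum_pnat_ite_coe_eq m (fun k => rename Sum.inl (Xnat k * q)) (by simp)

theorem dropY_rename (q : SymA) : dropY (rename Sum.inl q) = q := by
  rw [dropY, aeval_rename]
  exact aeval_X_left_apply q

theorem thetaShift_yv_mul_rename (a m : ℕ) (q : SymA) :
    thetaShift a (yv m * rename Sum.inl q) = Xnat (m + a) * q := by
  rw [thetaShift_apply, Yplus_iterate_yv_mul_rename, ThetaY_yv_mul_rename, dropY_rename]

theorem GammaY_yv_mul_rename (b : ℕ) (q : SymA) :
    GammaY (yv b * rename Sum.inl q) =
      alpha • ∑ᶠ j : ℕ+, ((j : ℕ) : F) • (yv (b + 1 + j) * rename Sum.inl (pderiv j q))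
      + ∑ p ∈ antidiagonal b, yv (p.1 + 1) * rename Sum.inl (Xnat p.2 * q)
      + ((alpha - 1) * b) • (yv (b + 1) * rename Sum.inl q) := by
  have first : ∑ᶠ (i : ℕ+) (j : ℕ+), ((j : ℕ) : F) • (yv (i + j) *
        pderiv (Sum.inl j) (pderiv (Sum.inr ((i : ℕ) - 1)) (yv b * rename Sum.inl q))) =
      ∑ᶠ j : ℕ+, ((j : ℕ) : F) • (yv (b + 1 + j) * rename Sum.inl (pderiv j q)) := by
    rw [finsum_eq_single _ b.succPNat fun i hi => ?_]
    · simp only [pderiv_inr_yv_mul_rename, Nat.succPNat_coe, Nat.succ_sub_one, if_true,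
        pderiv_rename Sum.inl_injective, Nat.succ_eq_add_one]
    · have : (i : ℕ) - 1 ≠ b := fun h => hi (PNat.coe_injective (by
        rw [Nat.succPNat_coe, Nat.succ_eq_add_one]; have := i.pos; omega))
      simp only [pderiv_inr_yv_mul_rename, if_neg this, map_zero, mul_zero, smul_zero,
        finsum_zero]
  have second : ∑ᶠ (i : ℕ+) (j : ℕ+), yv i * pv j *
        pderiv (Sum.inr ((i : ℕ) + j - 1)) (yv b * rename Sum.inl q) =
      ∑ p ∈ antidiagonal b, yv (p.1 + 1) * rename Sum.inl (Xnat p.2 * q) := by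
    have hpv (i j : ℕ+) :
        yv i * pv j * rename Sum.inl q = yv i * rename Sum.inl (Xnat j * q) := by
      rw [Xnat_coe, map_mul, rename_X, pv, mul_assoc]
    have hcond (i j : ℕ+) : ((i : ℕ) + j - 1 = b) ↔ ((i : ℕ) + j = b + 1) := by
      have := i.pos; omega
    simp only [pderiv_inr_yv_mul_rename, mul_ite, mul_zero, hpv, hcond]
    exact finsum_pnat_pnat_ite_add_eq b (fun i j => yv i * rename Sum.inl (Xnat j * q)) (by simp)
  have third : ∑ᶠ i : ℕ+, ((i : ℕ) : F) • (yv (i + 1) *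
        pderiv (Sum.inr (i : ℕ)) (yv b * rename Sum.inl q)) =
      (b : F) • (yv (b + 1) * rename Sum.inl q) := by
    simp only [pderiv_inr_yv_mul_rename, mul_ite, mul_zero, smul_ite, smul_zero]
    exact finsum_pnat_ite_coe_eq b (fun k => (k : F) • (yv (k + 1) * rename Sum.inl q)) (by simp)
  rw [GammaY, first, second, third, smul_smul]

theorem thetaShift_GammaY_yv_mul_rename (a b : ℕ) (q : SymA) :
    thetaShift a (GammaY (yv b * rename Sum.inl q)) =
      alpha • ∑ᶠ j : ℕ+, ((j : ℕ) : F) • (Xnat (b + 1 + j + a) * pderiv j q)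
      + ∑ r ∈ antidiagonal b, Xnat (r.1 + 1 + a) * (Xnat r.2 * q)
      + ((alpha - 1) * b) • (Xnat (b + 1 + a) * q) := by
  have hfin : HasFiniteSupport fun j : ℕ+ =>
      ((j : ℕ) : F) • (yv (b + 1 + j) * rename Sum.inl (pderiv j q)) :=
    hasFiniteSupport_apply_pderiv injective_id
      (fun (j : ℕ+) r => ((j : ℕ) : F) • (yv (b + 1 + j) * rename Sum.inl r)) (by simp) q
  rw [GammaY_yv_mul_rename, map_add, map_add, map_smul, map_finsum _ hfin, map_sum, map_smul]
  simp only [map_smul, thetaShift_yv_mul_rename]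

theorem smul_yv_mul_rename (c : F) (m : ℕ) (q : SymA) :
    c • (yv m * rename Sum.inl q) = yv m * rename Sum.inl (c • q) := by
  rw [map_smul, mul_smul_comm]

theorem Bc_self (n : ℕ) (f : SymA) : Bc n n f = alpha⁻¹ • (Xnat n * f) := by
  rw [Bc_eq_wordSum, wordSum_self, smul_yv_mul_rename, Yplus_iterate_yv_mul_rename,
    ThetaY_yv_mul_rename, dropY_rename, zero_add, mul_smul_comm]

theorem Bc_succ_self (n : ℕ) (f : SymA) :
    Bc (n + 1) n f = ∑ p ∈ antidiagonal n,
      thetaShift p.1 (GammaY (yv p.2 * rename Sum.inl (alpha⁻¹ • f))) := by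
  rw [Bc_eq_wordSum, wordSum_succ_self, smul_yv_mul_rename, ThetaY_eq_thetaYLinear, map_sum,
    map_sum]
  refine Finset.sum_congr rfl fun p _ => ?_
  rw [Yplus_iterate_yv_mul_rename, zero_add, thetaShift_apply, ThetaY_eq_thetaYLinear]

theorem alpha_ne_zero : alpha ≠ 0 := RatFunc.X_ne_zero

theorem sum_antidiagonal_pderiv_terms (ℓ : ℕ+) (f : SymA) :
    ∑ p ∈ antidiagonal (ℓ : ℕ), alpha • ∑ᶠ j : ℕ+,
        ((j : ℕ) : F) • (Xnat (p.2 + 1 + j + p.1) * pderiv j (alpha⁻¹ • f)) =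
      (((ℓ : ℕ) + 1 : ℕ) : F) •
        ∑ᶠ m : ℕ+, X (m + ℓ + 1) * (((m : ℕ) : F) • pderiv m f) := by
  have term (p : ℕ × ℕ) (hp : p ∈ antidiagonal (ℓ : ℕ)) :
      alpha • ∑ᶠ j : ℕ+,
          ((j : ℕ) : F) • (Xnat (p.2 + 1 + j + p.1) * pderiv j (alpha⁻¹ • f)) =
        ∑ᶠ m : ℕ+, X (m + ℓ + 1) * (((m : ℕ) : F) • pderiv m f) := by
    rw [smul_finsum]
    refine finsum_congr fun j => ?_
    rw [HasAntidiagonal.mem_antidiagonal] at hp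
    rw [show p.2 + 1 + j + p.1 = ((j + ℓ + 1 : ℕ+) : ℕ) by push_cast; omega, Xnat_coe,
      Derivation.map_smul, mul_smul_comm, mul_smul_comm, smul_smul, smul_smul, mul_right_comm,
      mul_inv_cancel₀ alpha_ne_zero, one_mul]
  rw [Finset.sum_congr rfl term, Finset.sum_const, Finset.Nat.card_antidiagonal,
    Nat.cast_smul_eq_nsmul]

theorem finsum_ite_add_eq_sum_antidiagonal (ℓ : ℕ+) (f : SymA) :
    ∑ᶠ (i : ℕ+) (j : ℕ+), (if i + j = ℓ + 1 then X i * X j * f else 0) =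
      ∑ p ∈ antidiagonal (ℓ : ℕ), Xnat (p.1 + 1) * Xnat p.2 * f := by
  simp only [← PNat.coe_inj, PNat.add_coe, PNat.one_coe, ← Xnat_coe]
  exact finsum_pnat_pnat_ite_add_eq _ (fun i j => Xnat i * Xnat j * f) (by simp)

theorem sum_antidiagonal_quadratic_terms (ℓ : ℕ+) (f : SymA) :
    ∑ p ∈ antidiagonal (ℓ : ℕ), ∑ r ∈ antidiagonal p.2,
        Xnat (r.1 + 1 + p.1) * (Xnat r.2 * (alpha⁻¹ • f)) =
      ((((ℓ : ℕ) + 1 : ℕ) : F) / (2 * alpha)) •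
        ∑ᶠ (i : ℕ+) (j : ℕ+), (if i + j = ℓ + 1 then X i * X j * f else 0) := by
  set H : ℕ → ℕ → SymA := fun i j => Xnat i * Xnat j * f
  have hH (i j : ℕ) : H i j = H j i := by simp only [H]; ring
  have weighted := Finset.Nat.sum_antidiagonal_fst_smul_of_symm (K := F) ((ℓ : ℕ) + 1) H hH
  simp only [Finset.Nat.sum_antidiagonal_succ, Nat.cast_zero, zero_smul, zero_add, H,
    Xnat_zero, zero_mul] at weighted
  have reorder : ∑ p ∈ antidiagonal (ℓ : ℕ), ∑ r ∈ antidiagonal p.2,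
        Xnat (r.1 + 1 + p.1) * (Xnat r.2 * (alpha⁻¹ • f)) =
      alpha⁻¹ •
        ∑ p ∈ antidiagonal (ℓ : ℕ), ∑ r ∈ antidiagonal p.2, H (p.1 + r.1 + 1) r.2 := by
    simp only [Finset.smul_sum]
    refine Finset.sum_congr rfl fun p _ => Finset.sum_congr rfl fun r _ => ?_
    rw [show r.1 + 1 + p.1 = p.1 + r.1 + 1 by ring]
    simp only [H, mul_smul_comm, mul_assoc]
  rw [reorder, Finset.Nat.sum_antidiagonal_sum_antidiagonal_snd _ fun s j => H (s + 1) j,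
    finsum_ite_add_eq_sum_antidiagonal]
  simp only [← Nat.cast_smul_eq_nsmul F]
  rw [weighted, smul_smul]
  congr 1
  ring

theorem sum_antidiagonal_linear_terms (ℓ : ℕ+) (f : SymA) :
    ∑ p ∈ antidiagonal (ℓ : ℕ),
        ((alpha - 1) * p.2) • (Xnat (p.2 + 1 + p.1) * (alpha⁻¹ • f)) =
      ((Nat.choose ((ℓ : ℕ) + 1) 2 : F) * (alpha - 1) / alpha) • (X (ℓ + 1) * f) := by
  have term (p : ℕ × ℕ) (hp : p ∈ antidiagonal (ℓ : ℕ)) :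
      ((alpha - 1) * p.2) • (Xnat (p.2 + 1 + p.1) * (alpha⁻¹ • f)) =
        ((p.2 : F) * ((alpha - 1) / alpha)) • (X (ℓ + 1) * f) := by
    rw [HasAntidiagonal.mem_antidiagonal] at hp
    rw [show p.2 + 1 + p.1 = ((ℓ + 1 : ℕ+) : ℕ) by push_cast; omega, Xnat_coe, mul_smul_comm,
      smul_smul]
    congr 1
    ring
  rw [Finset.sum_congr rfl term, ← Finset.sum_smul, ← Finset.sum_mul, ← Nat.cast_sum,
    Finset.Nat.sum_antidiagonal_snd, mul_div_assoc]

/-- **Lemma 6.5, Eqs. (6.3)–(6.4).** For `ℓ ≥ 1`: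
`C_{ℓ,0}^{(α)} = p_ℓ/α` and
`C_{ℓ,1}^{(α)} = C(ℓ+1,2)(b/α) p_{ℓ+1} + (ℓ+1) ∑_{m≥1} p_{m+ℓ+1} (m ∂/∂p_m)
 + ((ℓ+1)/(2α)) ∑_{1≤i≤ℓ} p_i p_{ℓ+1-i}`, with `b = α-1`. -/
theorem statement16 (ℓ : ℕ+) :
    (∀ f : SymA, Clk (ℓ : ℕ) 0 f = alpha⁻¹ • (MvPolynomial.X ℓ * f)) ∧
    (∀ f : SymA, Clk (ℓ : ℕ) 1 f =
      ((Nat.choose ((ℓ : ℕ) + 1) 2 : F) * (alpha - 1) / alpha) •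
          (MvPolynomial.X (ℓ + 1) * f)
        + (((ℓ : ℕ) + 1 : ℕ) : F) •
            ∑ᶠ m : ℕ+, MvPolynomial.X (m + ℓ + 1) * (((m : ℕ) : F) • MvPolynomial.pderiv m f)
        + ((((ℓ : ℕ) + 1 : ℕ) : F) / (2 * alpha)) •
            ∑ᶠ i : ℕ+, ∑ᶠ j : ℕ+,
              if i + j = ℓ + 1 then MvPolynomial.X i * MvPolynomial.X j * f else 0) := by
  refine ⟨fun f => ?_, fun f => ?_⟩
  · rw [Clk, add_zero, Bc_self, Xnat_coe]
  · rw [Clk, Bc_succ_self]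
    simp only [thetaShift_GammaY_yv_mul_rename, Finset.sum_add_distrib]
    rw [sum_antidiagonal_pderiv_terms, sum_antidiagonal_quadratic_terms,
      sum_antidiagonal_linear_terms]
    abel

end
end
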